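/- arXiv:1410.1179 — 2 statements merged into one kernel-verified Lean document; each statement's English description precedes it below -/
import Mathlib

section
/- There exists a constant C > 0 such that for all 0 < γ < 1/3, all ω ∈ [−N−1/2, N+1/2]², and j = 1, 2, one has: (i) |K̂_γ(ω)| ≤ 1; (ii) |∂_j K̂_γ(ω)| ≤ C γ min(|γω|, 1); (iii) |∂_j² K̂_γ(ω)| ≤ C γ², where ∂_j denotes the partial derivative with respect to the j-th coordinate of ω and |·| denotes the Euclidean norm. -/
open MeasureTheory

/-- The Euclidean norm on `ℝ²` (represented as `ℝ × ℝ`). -/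
noncomputable def enorm2 (x : ℝ × ℝ) : ℝ := Real.sqrt (x.1 ^ 2 + x.2 ^ 2)

/-- The microscopic system size `N = ⌊γ⁻²⌋`. -/
noncomputable def NN (γ : ℝ) : ℕ := ⌊γ⁻¹ ^ 2⌋₊

/-- The punctured lattice box `{-N, …, N}² \ {0}`. -/
noncomputable def latt (γ : ℝ) : Finset (ℤ × ℤ) :=
  ((Finset.Icc (-(NN γ : ℤ)) ((NN γ : ℤ))) ×ˢ (Finset.Icc (-(NN γ : ℤ)) ((NN γ : ℤ)))).erase
    (0, 0)

/-- The full lattice box `{-N, …, N}²`. -/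
noncomputable def fullbox (γ : ℝ) : Finset (ℤ × ℤ) :=
  (Finset.Icc (-(NN γ : ℤ)) ((NN γ : ℤ))) ×ˢ (Finset.Icc (-(NN γ : ℤ)) ((NN γ : ℤ)))

/-- The macroscopic lattice spacing `ε = 2 / (2N + 1)`. -/
noncomputable def epsg (γ : ℝ) : ℝ := 2 / (2 * (NN γ : ℝ) + 1)

/-- The normalising constant `c_γ`, with `c_γ⁻¹ = ∑_{k ∈ {-N,…,N}², k ≠ 0} γ² 𝔎(γ k)`. -/
noncomputable def cgam (K : ℝ × ℝ → ℝ) (γ : ℝ) : ℝ :=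
  (∑ k ∈ latt γ, γ ^ 2 * K (γ * (k.1 : ℝ), γ * (k.2 : ℝ)))⁻¹

/-- The discrete Fourier transform `K̂_γ` of the rescaled interaction kernel:
`K̂_γ(ω) = c_γ ∑_{k ∈ {-N,…,N}², k ≠ 0} γ² 𝔎(γ k) cos (π ε ω · k)`. -/
noncomputable def Khat (K : ℝ × ℝ → ℝ) (γ : ℝ) (ω : ℝ × ℝ) : ℝ :=
  cgam K γ * ∑ k ∈ latt γ, γ ^ 2 * K (γ * (k.1 : ℝ), γ * (k.2 : ℝ)) *
    Real.cos (Real.pi * epsg γ * (ω.1 * (k.1 : ℝ) + ω.2 * (k.2 : ℝ)))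

/-- The standing assumptions on the interaction kernel `𝔎 : ℝ² → [0, 1]`:
twice continuously differentiable, rotation invariant, compact support in `B(0,3)`,
`∫ 𝔎 = 1` and `∫ 𝔎(x) |x|² dx = 4`. -/
def IsKernel (K : ℝ × ℝ → ℝ) : Prop :=
  ContDiff ℝ 2 K ∧
  (∀ x, K x ∈ Set.Icc (0 : ℝ) 1) ∧
  (∀ x y : ℝ × ℝ, enorm2 x = enorm2 y → K x = K y) ∧
  (∀ x : ℝ × ℝ, 3 ≤ enorm2 x → K x = 0) ∧
  (∫ x : ℝ × ℝ, K x) = 1 ∧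
  (∫ x : ℝ × ℝ, K x * enorm2 x ^ 2) = 4

/-- The unit vector in direction `j` in `ℝ²`. -/
noncomputable def dirv (j : Fin 2) : ℝ × ℝ := if j = 0 then (1, 0) else (0, 1)

/-- The `j`-th coordinate of a point of `ℝ²`. -/
noncomputable def coordj (j : Fin 2) (ω : ℝ × ℝ) : ℝ := if j = 0 then ω.1 else ω.2

/-- The partial derivative `∂_j f` of a function on `ℝ²`. -/
noncomputable def pd (f : ℝ × ℝ → ℝ) (j : Fin 2) (ω : ℝ × ℝ) : ℝ := fderiv ℝ f ω (dirv j)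

/-- The second partial derivative `∂_j² f` of a function on `ℝ²`. -/
noncomputable def pd2 (f : ℝ × ℝ → ℝ) (j : Fin 2) (ω : ℝ × ℝ) : ℝ := pd (pd f j) j ω

/-
Write `K̂_γ(ω) = ∑ₖ pₖ cos θₖ(ω)` with weights `pₖ = c_γ γ² 𝔎(γk) ≥ 0` of total mass at most one and
linear phases `θₖ(ω) = π ε ω·k`. Each derivative `∂_j` brings down a factor `θₖ(e_j) = π ε kⱼ`, and
on the support of the weights `γ|k| ≤ 3` while `π ε ≤ 4 · 2γ²`, so `|θₖ(v)| ≤ 24 γ |v|`. Hence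
`|∂_j K̂_γ| ≤ 24γ · max_k |sin θₖ(ω)| ≤ 24γ min (24γ|ω|) 1` and `|∂_j² K̂_γ| ≤ (24γ)²`.
-/

open Real

section WeightedSums

variable {ι : Type*} {s : Finset ι}

theorem abs_sum_mul_le_of_sum_le_one {p t : ι → ℝ} {M : ℝ} (hp : ∀ i ∈ s, 0 ≤ p i)
    (hsum : ∑ i ∈ s, p i ≤ 1) (hM : 0 ≤ M) (ht : ∀ i ∈ s, p i ≠ 0 → |t i| ≤ M) :
    |∑ i ∈ s, p i * t i| ≤ M := by
  have hterm : ∀ i ∈ s, |p i * t i| ≤ p i * M := fun i hi => by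
    rcases eq_or_ne (p i) 0 with h | h
    · simp [h]
    · rw [abs_mul, abs_of_nonneg (hp i hi)]
      exact mul_le_mul_of_nonneg_left (ht i hi h) (hp i hi)
  calc |∑ i ∈ s, p i * t i| ≤ ∑ i ∈ s, p i * M :=
        (Finset.abs_sum_le_sum_abs _ _).trans (Finset.sum_le_sum hterm)
    _ = (∑ i ∈ s, p i) * M := (Finset.sum_mul _ _ _).symm
    _ ≤ M := mul_le_of_le_one_left hM hsum

variable {E : Type*} [NormedAddCommGroup E] [NormedSpace ℝ E]

theorem hasFDerivAt_sum_mul_comp (a : ι → ℝ) (L : ι → E →L[ℝ] ℝ) {g g' : ℝ → ℝ}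
    (hg : ∀ t, HasDerivAt g (g' t) t) (x : E) :
    HasFDerivAt (fun y => ∑ i ∈ s, a i * g (L i y)) (∑ i ∈ s, (a i * g' (L i x)) • L i) x :=
  HasFDerivAt.fun_sum fun i _ => by
    simpa [smul_smul] using (((hg (L i x)).comp_hasFDerivAt x (L i).hasFDerivAt).const_mul (a i))

theorem fderiv_sum_mul_comp_apply (a : ι → ℝ) (L : ι → E →L[ℝ] ℝ) {g g' : ℝ → ℝ}
    (hg : ∀ t, HasDerivAt g (g' t) t) (x v : E) :
    fderiv ℝ (fun y => ∑ i ∈ s, a i * g (L i y)) x v = ∑ i ∈ s, a i * L i v * g' (L i x) := by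
  rw [(hasFDerivAt_sum_mul_comp a L hg x).fderiv]
  simp only [sum_apply, smul_apply, smul_eq_mul]
  exact Finset.sum_congr rfl fun i _ => by ring

end WeightedSums

theorem abs_add_mul_le_enorm2_mul (x y : ℝ × ℝ) :
    |x.1 * y.1 + x.2 * y.2| ≤ enorm2 x * enorm2 y := by
  rw [enorm2, enorm2, ← Real.sqrt_mul (by positivity), ← Real.sqrt_sq_eq_abs]
  exact Real.sqrt_le_sqrt (by nlinarith [sq_nonneg (x.1 * y.2 - x.2 * y.1)])

theorem enorm2_nonneg (x : ℝ × ℝ) : 0 ≤ enorm2 x := Real.sqrt_nonneg _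

theorem enorm2_smul {c : ℝ} (hc : 0 ≤ c) (x : ℝ × ℝ) :
    enorm2 (c * x.1, c * x.2) = c * enorm2 x := by
  rw [enorm2, enorm2, show (c * x.1) ^ 2 + (c * x.2) ^ 2 = c ^ 2 * (x.1 ^ 2 + x.2 ^ 2) by ring,
    Real.sqrt_mul (sq_nonneg c), Real.sqrt_sq hc]

theorem enorm2_dirv (j : Fin 2) : enorm2 (dirv j) = 1 := by
  fin_cases j <;> simp [enorm2, dirv]

theorem epsg_le {γ : ℝ} (hγ : 0 < γ) : epsg γ ≤ 2 * γ ^ 2 := by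
  have hN : γ⁻¹ ^ 2 < (NN γ : ℝ) + 1 := Nat.lt_floor_add_one _
  have hγN : 1 < γ ^ 2 * ((NN γ : ℝ) + 1) := by
    calc (1 : ℝ) = γ ^ 2 * γ⁻¹ ^ 2 := by field_simp
      _ < γ ^ 2 * ((NN γ : ℝ) + 1) := by gcongr
  rw [epsg, div_le_iff₀ (by positivity)]
  nlinarith [(NN γ).cast_nonneg (α := ℝ)]

noncomputable def weight (K : ℝ × ℝ → ℝ) (γ : ℝ) (k : ℤ × ℤ) : ℝ :=
  cgam K γ * (γ ^ 2 * K (γ * (k.1 : ℝ), γ * (k.2 : ℝ)))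

noncomputable def phase (γ : ℝ) (k : ℤ × ℤ) : (ℝ × ℝ) →L[ℝ] ℝ :=
  (π * epsg γ) • ((k.1 : ℝ) • ContinuousLinearMap.fst ℝ ℝ ℝ +
    (k.2 : ℝ) • ContinuousLinearMap.snd ℝ ℝ ℝ)

theorem phase_apply (γ : ℝ) (k : ℤ × ℤ) (ω : ℝ × ℝ) :
    phase γ k ω = π * epsg γ * (ω.1 * (k.1 : ℝ) + ω.2 * (k.2 : ℝ)) := by
  simp only [phase, smul_apply, add_apply,
    ContinuousLinearMap.coe_fst', ContinuousLinearMap.coe_snd', smul_eq_mul]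
  ring

section Kernel

variable {K : ℝ × ℝ → ℝ} {γ : ℝ}

theorem Khat_eq_sum :
    Khat K γ = fun ω => ∑ k ∈ latt γ, weight K γ k * cos (phase γ k ω) := by
  funext ω
  simp only [Khat, weight, phase_apply, Finset.mul_sum, mul_assoc]

theorem pd_Khat (j : Fin 2) :
    pd (Khat K γ) j = fun ω => ∑ k ∈ latt γ,
      weight K γ k * phase γ k (dirv j) * -sin (phase γ k ω) := by
  funext ω
  rw [pd, Khat_eq_sum]
  exact fderiv_sum_mul_comp_apply _ _ hasDerivAt_cos ω (dirv j)

theorem pd2_Khat (j : Fin 2) (ω : ℝ × ℝ) :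
    pd2 (Khat K γ) j ω = ∑ k ∈ latt γ,
      weight K γ k * phase γ k (dirv j) * phase γ k (dirv j) * -cos (phase γ k ω) := by
  rw [pd2, pd_Khat, pd]
  exact fderiv_sum_mul_comp_apply _ _ (fun t => (hasDerivAt_sin t).neg) ω (dirv j)

theorem weight_nonneg (hK0 : ∀ x, 0 ≤ K x) (k : ℤ × ℤ) : 0 ≤ weight K γ k :=
  mul_nonneg (inv_nonneg.mpr (Finset.sum_nonneg fun _ _ => mul_nonneg (sq_nonneg γ) (hK0 _)))
    (mul_nonneg (sq_nonneg γ) (hK0 _))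

theorem sum_weight_le_one (hK0 : ∀ x, 0 ≤ K x) : ∑ k ∈ latt γ, weight K γ k ≤ 1 := by
  simp only [weight]
  rw [← Finset.mul_sum, cgam]
  rcases (Finset.sum_nonneg fun k _ => mul_nonneg (sq_nonneg γ) (hK0 _) :
      0 ≤ ∑ k ∈ latt γ, γ ^ 2 * K (γ * (k.1 : ℝ), γ * (k.2 : ℝ))).eq_or_lt with h | h
  · rw [← h]; simp
  · exact (inv_mul_cancel₀ h.ne').le

theorem abs_phase_le (hsupp : ∀ x, 3 ≤ enorm2 x → K x = 0) (hγ : 0 < γ) {k : ℤ × ℤ}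
    (hk : weight K γ k ≠ 0) (v : ℝ × ℝ) : |phase γ k v| ≤ 24 * γ * enorm2 v := by
  have hγk : γ * enorm2 ((k.1 : ℝ), (k.2 : ℝ)) ≤ 3 := by
    rw [← enorm2_smul hγ.le]
    by_contra! h
    exact hk (by simp [weight, hsupp _ h.le])
  have hε : π * epsg γ ≤ 8 * γ ^ 2 := by
    nlinarith [pi_le_four, pi_pos, epsg_le hγ, sq_nonneg γ]
  have hv := enorm2_nonneg v
  have hkn := enorm2_nonneg ((k.1 : ℝ), (k.2 : ℝ))
  calc |phase γ k v| ≤ π * epsg γ * (enorm2 v * enorm2 ((k.1 : ℝ), (k.2 : ℝ))) := by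
        have hε0 : 0 ≤ π * epsg γ := by unfold epsg; positivity
        rw [phase_apply, abs_mul, abs_of_nonneg hε0]
        exact mul_le_mul_of_nonneg_left (abs_add_mul_le_enorm2_mul v ((k.1 : ℝ), (k.2 : ℝ))) hε0
    _ ≤ 8 * γ ^ 2 * (enorm2 v * enorm2 ((k.1 : ℝ), (k.2 : ℝ))) := by gcongr
    _ = 8 * γ * enorm2 v * (γ * enorm2 ((k.1 : ℝ), (k.2 : ℝ))) := by ring
    _ ≤ 8 * γ * enorm2 v * 3 := by gcongr
    _ = 24 * γ * enorm2 v := by ring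

end Kernel

/-- There is a constant `C > 0` such that for all `0 < γ < 1/3`, all
`ω ∈ [-N-1/2, N+1/2]²` and `j = 1, 2`:
(i) `|K̂_γ(ω)| ≤ 1`; (ii) `|∂_j K̂_γ(ω)| ≤ C γ min (γ|ω|) 1`; (iii) `|∂_j² K̂_γ(ω)| ≤ C γ²`. -/
theorem stmt8 (K : ℝ × ℝ → ℝ) (hK : IsKernel K) :
    ∃ C : ℝ, 0 < C ∧ ∀ γ : ℝ, 0 < γ → γ < 1 / 3 → ∀ ω : ℝ × ℝ,
      |ω.1| ≤ (NN γ : ℝ) + 1 / 2 → |ω.2| ≤ (NN γ : ℝ) + 1 / 2 → ∀ j : Fin 2,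
      |Khat K γ ω| ≤ 1 ∧
      |pd (Khat K γ) j ω| ≤ C * γ * min (γ * enorm2 ω) 1 ∧
      |pd2 (Khat K γ) j ω| ≤ C * γ ^ 2 := by
  obtain ⟨-, hrange, -, hsupp, -, -⟩ := hK
  have hK0 : ∀ x, 0 ≤ K x := fun x => (hrange x).1
  refine ⟨576, by norm_num, fun γ hγ _ ω _ _ j => ?_⟩
  have hweights := fun t M => abs_sum_mul_le_of_sum_le_one (t := t) (M := M)
    (fun k _ => weight_nonneg hK0 k) (sum_weight_le_one (γ := γ) hK0)
  have hdir : ∀ k, weight K γ k ≠ 0 → |phase γ k (dirv j)| ≤ 24 * γ := fun k hk => by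
    simpa [enorm2_dirv] using abs_phase_le hsupp hγ hk (dirv j)
  have hmin : 0 ≤ min (γ * enorm2 ω) 1 := le_min (mul_nonneg hγ.le (enorm2_nonneg ω)) zero_le_one
  refine ⟨?_, ?_, ?_⟩
  · rw [Khat_eq_sum]
    exact hweights _ _ zero_le_one fun k _ _ => abs_cos_le_one _
  · rw [pd_Khat]
    simp only [mul_assoc]
    refine hweights _ _ (by positivity) fun k _ hk => ?_
    have hsin : |sin (phase γ k ω)| ≤ 24 * min (γ * enorm2 ω) 1 := by
      rw [mul_min_of_nonneg _ _ (by norm_num : (0 : ℝ) ≤ 24)]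
      refine le_min (abs_sin_le_abs.trans ?_) ((abs_sin_le_one _).trans (by norm_num))
      simpa [mul_assoc] using abs_phase_le hsupp hγ hk ω
    rw [abs_mul, abs_neg]
    calc |phase γ k (dirv j)| * |sin (phase γ k ω)|
        ≤ 24 * γ * (24 * min (γ * enorm2 ω) 1) := by gcongr; exact hdir k hk
      _ = 576 * (γ * min (γ * enorm2 ω) 1) := by ring
  · rw [pd2_Khat]
    simp only [mul_assoc]
    refine hweights _ _ (by positivity) fun k _ hk => ?_
    rw [abs_mul, abs_mul, abs_neg]
    calc |phase γ k (dirv j)| * (|phase γ k (dirv j)| * |cos (phase γ k ω)|)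
        ≤ 24 * γ * (24 * γ * 1) := by
          gcongr
          exacts [hdir k hk, hdir k hk, abs_cos_le_one _]
      _ = 576 * γ ^ 2 := by ring
end

section
/- Let χ : ℝⁿ → ℝ be a smooth function with compact support, and for ε ∈ (0,1] define č_ε(x) = εⁿ Σ_{ω ∈ εℤⁿ} e^{iπω·x} χ(ω) (a finite sum since χ is compactly supported). Then for every positive integer k there exists a constant C_k such that for all ε ∈ (0,1] and all x ∈ ℝⁿ with x ≠ 0 and max_{1≤j≤n} |x_j| ≤ 1/ε, one has |č_ε(x)| ≤ C_k / |x|^{2k}, where |·| denotes the Euclidean norm. -/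
noncomputable section

universe u v

variable {E : Type u} [NormedAddCommGroup E] [NormedSpace ℝ E]

/-- Iterated difference operator: `(Δ_v g)(y) = g (y - v) - g y`, applied `N` times. -/
def iterDiff {F : Type v} [NormedAddCommGroup F] (v : E) : ℕ → (E → F) → E → F
  | 0, g => g
  | (N + 1), g => fun y => iterDiff v N g (y - v) - iterDiff v N g y

lemma iterDiff_contDiff {F : Type v} [NormedAddCommGroup F] [NormedSpace ℝ F]
    (v : E) (N : ℕ) (g : E → F) (hg : ContDiff ℝ (⊤ : ℕ∞) g) :
    ContDiff ℝ (⊤ : ℕ∞) (iterDiff v N g) := by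
  induction N with
  | zero => exact hg
  | succ N ih =>
    exact (ih.comp (contDiff_id.sub contDiff_const)).sub ih

lemma iterDiff_fderiv {F : Type v} [NormedAddCommGroup F] [NormedSpace ℝ F]
    (v : E) (N : ℕ) (g : E → F) (hg : ContDiff ℝ (⊤ : ℕ∞) g) :
    fderiv ℝ (iterDiff v N g) = iterDiff v N (fderiv ℝ g) := by
  induction N with
  | zero => rfl
  | succ N ih =>
    funext z
    have hF : ContDiff ℝ (⊤ : ℕ∞) (iterDiff v N g) := iterDiff_contDiff v N g hg
    have hFd : Differentiable ℝ (iterDiff v N g) := hF.differentiable (by simp)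
    have h1 : HasFDerivAt (fun y => iterDiff v N g (y - v))
        (fderiv ℝ (iterDiff v N g) (z - v)) z := by
      have := ((hFd (z - v)).hasFDerivAt).comp z ((hasFDerivAt_id z).sub_const v)
      exact this
    have h2 : HasFDerivAt (fun y => iterDiff v N g (y - v) - iterDiff v N g y)
        (fderiv ℝ (iterDiff v N g) (z - v) - fderiv ℝ (iterDiff v N g) z) z :=
      h1.sub (hFd z).hasFDerivAt
    show fderiv ℝ (fun y => iterDiff v N g (y - v) - iterDiff v N g y) z = _
    rw [h2.fderiv, ih]
    rfl

lemma iterDiff_norm_le (v : E) :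
    ∀ (N : ℕ) {F : Type (max u v)} [NormedAddCommGroup F] [NormedSpace ℝ F]
      (g : E → F) (_ : ContDiff ℝ (⊤ : ℕ∞) g) (M : ℝ)
      (_ : ∀ y, ‖iteratedFDeriv ℝ N g y‖ ≤ M) (y : E),
      ‖iterDiff v N g y‖ ≤ M * ‖v‖ ^ N
  | 0, F, _, _, g, hg, M, hM, y => by simpa [iterDiff] using hM y
  | (N + 1), F, _, _, g, hg, M, hM, y => by
    have hFd : Differentiable ℝ (iterDiff v N g) :=
      (iterDiff_contDiff v N g hg).differentiable (by simp)
    have hbound : ∀ z : E, ‖fderiv ℝ (iterDiff v N g) z‖ ≤ M * ‖v‖ ^ N := by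
      intro z
      rw [iterDiff_fderiv v N g hg]
      refine iterDiff_norm_le v N (fderiv ℝ g) (hg.fderiv_right (by simp)) M (fun w => ?_) z
      rw [norm_iteratedFDeriv_fderiv]
      exact hM w
    calc ‖iterDiff v (N + 1) g y‖ = ‖iterDiff v N g (y - v) - iterDiff v N g y‖ := rfl
      _ ≤ (M * ‖v‖ ^ N) * ‖(y - v) - y‖ := by
          exact Convex.norm_image_sub_le_of_norm_fderiv_le (s := Set.univ)
            (fun z _ => hFd z) (fun z _ => hbound z) convex_univ
            (Set.mem_univ y) (Set.mem_univ (y - v))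
      _ = M * ‖v‖ ^ (N + 1) := by
          have h : ‖y - v - y‖ = ‖v‖ := by simp
          rw [h]; ring

lemma iterDiff_eq_zero {n : ℕ} {F : Type v} [NormedAddCommGroup F]
    (v : Fin n → ℝ) (b : ℝ) (hb : ∀ i, |v i| ≤ b) (N : ℕ) (g : (Fin n → ℝ) → F) (ρ : ℝ)
    (hg : ∀ y : Fin n → ℝ, (∃ j, ρ < |y j|) → g y = 0) :
    ∀ y : Fin n → ℝ, (∃ j, ρ + N * b < |y j|) → iterDiff v N g y = 0 := by
  induction N generalizing ρ with
  | zero => intro y hy; exact hg y (by simpa using hy)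
  | succ N ih =>
    intro y hy
    obtain ⟨j, hj⟩ := hy
    have hb0 : 0 ≤ b := le_trans (abs_nonneg _) (hb j)
    have h1 : iterDiff v N g y = 0 := by
      refine ih ρ hg y ⟨j, ?_⟩
      have : (N : ℝ) * b ≤ (N + 1 : ℕ) * b := by
        push_cast; nlinarith
      linarith
    have h2 : iterDiff v N g (y - v) = 0 := by
      refine ih ρ hg (y - v) ⟨j, ?_⟩
      have h3 : |y j| - |v j| ≤ |(y - v) j| := by
        have := abs_sub_abs_le_abs_sub (y j) (v j)
        simpa using this
      have h5 : ρ + (N:ℝ) * b < |y j| - b := by push_cast at hj ⊢; nlinarith [hb j]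
      linarith [hb j]
    show iterDiff v N g (y - v) - iterDiff v N g y = 0
    rw [h1, h2, sub_zero]

end

noncomputable section

open Complex

/-- The character `e^{iπ ε m·x}`. -/
def eFun (n : ℕ) (ε : ℝ) (x : Fin n → ℝ) (m : Fin n → ℤ) : ℂ :=
  Complex.exp ((Real.pi : ℂ) * Complex.I * ((∑ j, (ε * (m j : ℝ)) * x j : ℝ) : ℂ))

/-- The lattice sum `∑_m e^{iπ ε m·x} g(εm)`. -/
def TFun (n : ℕ) (ε : ℝ) (x : Fin n → ℝ) (g : (Fin n → ℝ) → ℝ) : ℂ :=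
  ∑' m : Fin n → ℤ, eFun n ε x m * ((g fun j => ε * (m j : ℝ)) : ℂ)

lemma norm_eFun (n : ℕ) (ε : ℝ) (x : Fin n → ℝ) (m : Fin n → ℤ) : ‖eFun n ε x m‖ = 1 := by
  rw [eFun, Complex.norm_exp]
  simp

lemma eFun_add_single (n : ℕ) (ε : ℝ) (x : Fin n → ℝ) (m : Fin n → ℤ) (j : Fin n) :
    eFun n ε x (m + (Pi.single j 1 : Fin n → ℤ)) =
      eFun n ε x m * Complex.exp ((Real.pi : ℂ) * Complex.I * ((ε * x j : ℝ) : ℂ)) := by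
  rw [eFun, eFun, ← Complex.exp_add]
  congr 1
  have h1 : (∑ i, (ε * (((m + (Pi.single j 1 : Fin n → ℤ)) i : ℤ) : ℝ)) * x i)
      = (∑ i, (ε * (m i : ℝ)) * x i) + ε * x j := by
    have h2 : ∀ i, (ε * (((m + (Pi.single j 1 : Fin n → ℤ)) i : ℤ) : ℝ)) * x i
        = (ε * (m i : ℝ)) * x i + (if i = j then ε * x j else 0) := by
      intro i
      by_cases h : i = j
      · subst h
        rw [Pi.add_apply, Pi.single_eq_same, if_pos rfl]
        push_cast; ring
      · rw [Pi.add_apply, Pi.single_eq_of_ne h, if_neg h]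
        push_cast; ring
    rw [Finset.sum_congr rfl (fun i _ => h2 i), Finset.sum_add_distrib]
    simp
  rw [h1]
  push_cast
  ring

lemma TFun_term_eq_zero {n : ℕ} {ε : ℝ} (hε : 0 < ε) (x : Fin n → ℝ) (ρ : ℝ)
    (g : (Fin n → ℝ) → ℝ) (hg : ∀ y : Fin n → ℝ, (∃ i, ρ < |y i|) → g y = 0)
    {m : Fin n → ℤ}
    (hm : m ∉ Fintype.piFinset fun _ : Fin n => Finset.Icc (-⌈ρ/ε⌉) ⌈ρ/ε⌉) :
    eFun n ε x m * ((g fun j => ε * (m j : ℝ)) : ℂ) = 0 := by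
  rw [Fintype.mem_piFinset] at hm
  push_neg at hm
  obtain ⟨i, hi⟩ := hm
  rw [Finset.mem_Icc, not_and_or, not_le, not_le] at hi
  have h1 : (⌈ρ/ε⌉ : ℝ) < |(m i : ℝ)| := by
    rcases hi with h | h
    · have h' : (⌈ρ/ε⌉ : ℝ) < -(m i : ℝ) := by
        have : (⌈ρ/ε⌉ : ℤ) < -(m i) := by omega
        exact_mod_cast this
      exact lt_of_lt_of_le h' (neg_le_abs _)
    · exact lt_of_lt_of_le (by exact_mod_cast h) (le_abs_self _)
  have h2 : ρ < |ε * (m i : ℝ)| := by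
    rw [abs_mul, abs_of_pos hε]
    have h3 : ρ / ε ≤ (⌈ρ/ε⌉ : ℝ) := Int.le_ceil _
    have h4 := lt_of_le_of_lt h3 h1
    calc ρ = ε * (ρ / ε) := by field_simp
      _ < ε * |(m i : ℝ)| := mul_lt_mul_of_pos_left h4 hε
  have : g (fun j => ε * (m j : ℝ)) = 0 := hg _ ⟨i, h2⟩
  rw [this]
  simp

lemma TFun_summable {n : ℕ} {ε : ℝ} (hε : 0 < ε) (x : Fin n → ℝ) (ρ : ℝ)
    (g : (Fin n → ℝ) → ℝ) (hg : ∀ y : Fin n → ℝ, (∃ i, ρ < |y i|) → g y = 0) :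
    Summable (fun m : Fin n → ℤ => eFun n ε x m * ((g fun j => ε * (m j : ℝ)) : ℂ)) :=
  summable_of_ne_finset_zero fun m hm => TFun_term_eq_zero hε x ρ g hg hm

lemma TFun_shift (n : ℕ) (ε : ℝ) (x : Fin n → ℝ) (j : Fin n) (g : (Fin n → ℝ) → ℝ) :
    TFun n ε x (fun y => g (y - (Pi.single j ε : Fin n → ℝ))) =
      Complex.exp ((Real.pi : ℂ) * Complex.I * ((ε * x j : ℝ) : ℂ)) * TFun n ε x g := by
  have harg : ∀ m : Fin n → ℤ,
      (fun i => ε * (((m - (Pi.single j 1 : Fin n → ℤ)) i : ℤ) : ℝ))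
        = (fun i => ε * (m i : ℝ)) - (Pi.single j ε : Fin n → ℝ) := by
    intro m
    funext i
    by_cases h : i = j
    · subst h
      rw [Pi.sub_apply, Pi.sub_apply, Pi.single_eq_same, Pi.single_eq_same]
      push_cast; ring
    · rw [Pi.sub_apply, Pi.sub_apply, Pi.single_eq_of_ne h, Pi.single_eq_of_ne h]
      push_cast; ring
  have key := Equiv.tsum_eq (Equiv.subRight (Pi.single j 1 : Fin n → ℤ))
    (fun m : Fin n → ℤ =>
      eFun n ε x (m + (Pi.single j 1 : Fin n → ℤ)) * ((g fun i => ε * (m i : ℝ)) : ℂ))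
  calc TFun n ε x (fun y => g (y - (Pi.single j ε : Fin n → ℝ)))
      = ∑' m : Fin n → ℤ,
          eFun n ε x m * ((g ((fun i => ε * (m i : ℝ)) - (Pi.single j ε : Fin n → ℝ))) : ℂ) := rfl
    _ = ∑' m : Fin n → ℤ,
          eFun n ε x (m + (Pi.single j 1 : Fin n → ℤ)) * ((g fun i => ε * (m i : ℝ)) : ℂ) := by
        rw [← key]
        refine tsum_congr fun m => ?_
        simp only [Equiv.subRight_apply]
        rw [sub_add_cancel, harg m]
    _ = ∑' m : Fin n → ℤ, Complex.exp ((Real.pi : ℂ) * Complex.I * ((ε * x j : ℝ) : ℂ)) *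
          (eFun n ε x m * ((g fun i => ε * (m i : ℝ)) : ℂ)) := by
        refine tsum_congr fun m => ?_
        rw [eFun_add_single]
        ring
    _ = _ := by rw [tsum_mul_left]; rfl

end
section KeyIdentity

open Complex

lemma TFun_step {n : ℕ} {ε : ℝ} (hε : 0 < ε) (x : Fin n → ℝ) (j : Fin n) (ρ : ℝ)
    (g : (Fin n → ℝ) → ℝ) (hg : ∀ y : Fin n → ℝ, (∃ i, ρ < |y i|) → g y = 0) :
    TFun n ε x (fun y => g (y - (Pi.single j ε : Fin n → ℝ)) - g y) =
      (Complex.exp ((Real.pi : ℂ) * Complex.I * ((ε * x j : ℝ) : ℂ)) - 1) * TFun n ε x g := by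
  have hvb : ∀ i, |(Pi.single j ε : Fin n → ℝ) i| ≤ ε := by
    intro i
    by_cases h : i = j
    · subst h; rw [Pi.single_eq_same]; exact le_of_eq (abs_of_pos hε)
    · rw [Pi.single_eq_of_ne h]; simpa using hε.le
  have hg' : ∀ y : Fin n → ℝ, (∃ i, ρ + ε < |y i|) →
      g (y - (Pi.single j ε : Fin n → ℝ)) = 0 := by
    intro y ⟨i, hi⟩
    refine hg _ ⟨i, ?_⟩
    have h3 : |y i| - |(Pi.single j ε : Fin n → ℝ) i| ≤ |(y - (Pi.single j ε : Fin n → ℝ)) i| := by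
      have := abs_sub_abs_le_abs_sub (y i) ((Pi.single j ε : Fin n → ℝ) i)
      simpa using this
    have := hvb i
    linarith
  have h1 : Summable (fun m : Fin n → ℤ =>
      eFun n ε x m *
        ((g ((fun i => ε * (m i : ℝ)) - (Pi.single j ε : Fin n → ℝ))) : ℂ)) :=
    TFun_summable hε x (ρ + ε) (fun y => g (y - (Pi.single j ε : Fin n → ℝ))) hg'
  have h2 := TFun_summable hε x ρ g hg
  calc TFun n ε x (fun y => g (y - (Pi.single j ε : Fin n → ℝ)) - g y)
      = ∑' m : Fin n → ℤ,
          (eFun n ε x m * ((g ((fun i => ε * (m i : ℝ)) - (Pi.single j ε : Fin n → ℝ))) : ℂ)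
            - eFun n ε x m * ((g fun i => ε * (m i : ℝ)) : ℂ)) := by
        refine tsum_congr fun m => ?_
        push_cast
        ring
    _ = TFun n ε x (fun y => g (y - (Pi.single j ε : Fin n → ℝ))) - TFun n ε x g :=
        Summable.tsum_sub h1 h2
    _ = _ := by rw [TFun_shift]; ring

lemma TFun_key {n : ℕ} {ε : ℝ} (hε : 0 < ε) (hε1 : ε ≤ 1) (x : Fin n → ℝ) (j : Fin n) (R : ℝ)
    (χ : (Fin n → ℝ) → ℝ) (hχ0 : ∀ y : Fin n → ℝ, (∃ i, R < |y i|) → χ y = 0) (N : ℕ) :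
    (Complex.exp ((Real.pi : ℂ) * Complex.I * ((ε * x j : ℝ) : ℂ)) - 1) ^ N * TFun n ε x χ =
      TFun n ε x (iterDiff (Pi.single j ε : Fin n → ℝ) N χ) := by
  have hvb : ∀ i, |(Pi.single j ε : Fin n → ℝ) i| ≤ ε := by
    intro i
    by_cases h : i = j
    · subst h; rw [Pi.single_eq_same]; exact le_of_eq (abs_of_pos hε)
    · rw [Pi.single_eq_of_ne h]; simpa using hε.le
  induction N with
  | zero => simp [iterDiff]
  | succ N ih =>
    have hvan : ∀ y : Fin n → ℝ, (∃ i, R + N * ε < |y i|) →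
        iterDiff (Pi.single j ε : Fin n → ℝ) N χ y = 0 :=
      iterDiff_eq_zero _ ε hvb N χ R hχ0
    have hstep := TFun_step hε x j (R + N * ε)
      (iterDiff (Pi.single j ε : Fin n → ℝ) N χ) hvan
    calc (Complex.exp ((Real.pi : ℂ) * Complex.I * ((ε * x j : ℝ) : ℂ)) - 1) ^ (N + 1)
          * TFun n ε x χ
        = (Complex.exp ((Real.pi : ℂ) * Complex.I * ((ε * x j : ℝ) : ℂ)) - 1) *
            ((Complex.exp ((Real.pi : ℂ) * Complex.I * ((ε * x j : ℝ) : ℂ)) - 1) ^ N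
              * TFun n ε x χ) := by ring
      _ = (Complex.exp ((Real.pi : ℂ) * Complex.I * ((ε * x j : ℝ) : ℂ)) - 1) *
            TFun n ε x (iterDiff (Pi.single j ε : Fin n → ℝ) N χ) := by rw [ih]
      _ = _ := by rw [← hstep]; rfl

end KeyIdentity
lemma norm_exp_pi_I_sub_one {t : ℝ} (ht : |t| ≤ 1) :
    2 * |t| ≤ ‖Complex.exp ((Real.pi : ℂ) * Complex.I * ((t : ℝ) : ℂ)) - 1‖ := by
  have hπ := Real.pi_pos
  set θ : ℝ := Real.pi * t with hθ
  have hcθ : Complex.exp ((Real.pi : ℂ) * Complex.I * ((t : ℝ) : ℂ))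
      = Complex.exp (((θ : ℝ) : ℂ) * Complex.I) := by
    rw [hθ]
    congr 1; push_cast; ring
  have hre : (Complex.exp ((θ : ℂ) * Complex.I) - 1).re = Real.cos θ - 1 := by
    simp [Complex.exp_ofReal_mul_I_re]
  have him : (Complex.exp ((θ : ℂ) * Complex.I) - 1).im = Real.sin θ := by
    simp [Complex.exp_ofReal_mul_I_im]
  have hnorm2 : ‖Complex.exp ((θ : ℂ) * Complex.I) - 1‖ ^ 2 = 2 - 2 * Real.cos θ := by
    rw [Complex.sq_norm, Complex.normSq_apply, hre, him]
    nlinarith [Real.sin_sq_add_cos_sq θ]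
  have h4sin : 2 - 2 * Real.cos θ = 4 * Real.sin (θ / 2) ^ 2 := by
    have h := Real.sin_sq_eq_half_sub (θ / 2)
    rw [show 2 * (θ / 2) = θ by ring] at h
    linarith
  have hsinsq : Real.sin (θ / 2) ^ 2 = Real.sin (|θ| / 2) ^ 2 := by
    rcases abs_cases θ with ⟨h, _⟩ | ⟨h, _⟩
    · rw [h]
    · rw [h, show -θ / 2 = -(θ / 2) by ring, Real.sin_neg]; ring
  have hθabs : |θ| ≤ Real.pi := by
    rw [hθ, abs_mul, abs_of_pos hπ]
    nlinarith
  have hjordan : |t| ≤ Real.sin (|θ| / 2) := by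
    have h1 : 2 / Real.pi * (|θ| / 2) ≤ Real.sin (|θ| / 2) :=
      Real.mul_le_sin (by positivity) (by linarith)
    have h2 : 2 / Real.pi * (|θ| / 2) = |t| := by
      rw [hθ, abs_mul, abs_of_pos hπ]
      field_simp
    linarith [h2 ▸ h1]
  have hfinal : (2 * |t|) ^ 2 ≤ ‖Complex.exp ((θ : ℂ) * Complex.I) - 1‖ ^ 2 := by
    rw [hnorm2, h4sin, hsinsq]
    have := pow_le_pow_left₀ (abs_nonneg t) hjordan 2
    nlinarith
  rw [hcθ]
  have h := Real.sqrt_le_sqrt hfinal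
  rw [Real.sqrt_sq (by positivity), Real.sqrt_sq (norm_nonneg _)] at h
  exact h
/-- The function `č_ε(x) = εⁿ ∑_{ω ∈ εℤⁿ} e^{iπ ω·x} χ(ω)` (a finite sum since `χ` is
compactly supported, written here as a `tsum` over `m ∈ ℤⁿ` with `ω = ε m`). -/
noncomputable def chkEps (n : ℕ) (χ : (Fin n → ℝ) → ℝ) (ε : ℝ) (x : Fin n → ℝ) : ℂ :=
  ((ε ^ n : ℝ) : ℂ) *
    ∑' m : Fin n → ℤ,
      Complex.exp ((Real.pi : ℂ) * Complex.I * ((∑ j, (ε * (m j : ℝ)) * x j : ℝ) : ℂ)) *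
        ((χ fun j => ε * (m j : ℝ) : ℝ) : ℂ)
set_option maxHeartbeats 2000000 in
/-- Let `χ : ℝⁿ → ℝ` be smooth and compactly supported.  For every positive integer `k`
there is a constant `C_k` such that for all `ε ∈ (0, 1]` and all `x ≠ 0` with
`max_j |x_j| ≤ 1/ε`, one has `|č_ε(x)| ≤ C_k / |x|^(2k)`, `|x|` the Euclidean norm. -/
theorem stmt15 (n : ℕ) (χ : (Fin n → ℝ) → ℝ) (hχ : ContDiff ℝ (⊤ : ℕ∞) χ)
    (hsupp : HasCompactSupport χ) (k : ℕ) (hk : 1 ≤ k) :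
    ∃ C : ℝ, ∀ ε : ℝ, 0 < ε → ε ≤ 1 → ∀ x : Fin n → ℝ, x ≠ 0 →
      (∀ j, |x j| ≤ 1 / ε) →
      ‖chkEps n χ ε x‖ ≤ C / Real.sqrt (∑ j, x j ^ 2) ^ (2 * k) := by
  rcases Nat.eq_zero_or_pos n with hn | hn
  · refine ⟨0, fun ε hε hε1 x hx hxb => absurd ?_ hx⟩
    subst hn; funext i; exact i.elim0
  obtain ⟨R0, hR0⟩ := hsupp.isBounded.subset_closedBall (0 : Fin n → ℝ)
  set R := max R0 0 with hRdef
  have hRb : tsupport χ ⊆ Metric.closedBall 0 R :=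
    hR0.trans (Metric.closedBall_subset_closedBall (le_max_left _ _))
  have hRnn : (0:ℝ) ≤ R := le_max_right _ _
  have hχ0 : ∀ y : Fin n → ℝ, (∃ i, R < |y i|) → χ y = 0 := by
    rintro y ⟨i, hi⟩
    apply image_eq_zero_of_notMem_tsupport
    intro hy
    have h1 := hRb hy
    rw [Metric.mem_closedBall, dist_zero_right] at h1
    have h2 : |y i| ≤ ‖y‖ := by simpa using norm_le_pi_norm y i
    linarith
  obtain ⟨M0, hM0⟩ := (hχ.continuous_iteratedFDeriv (by rw [← WithTop.coe_natCast]; exact WithTop.coe_le_coe.mpr le_top)).bounded_above_of_compact_support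
    (hsupp.iteratedFDeriv (2*k))
  set M := max M0 0 with hMdef
  have hM : ∀ y, ‖iteratedFDeriv ℝ (2*k) χ y‖ ≤ M := fun y => (hM0 y).trans (le_max_left _ _)
  have hMnn : (0:ℝ) ≤ M := le_max_right _ _
  set A : ℝ := 2*R + 4*(k:ℝ) + 3 with hAdef
  have hA : 0 < A := by positivity
  set C : ℝ := A^n * M * (n:ℝ)^k with hCdef
  refine ⟨C, ?_⟩
  intro ε hε hε1 x hx hxb
  obtain ⟨j, -, hj⟩ := Finset.exists_max_image Finset.univ (fun i => |x i|)
    ⟨⟨0, hn⟩, Finset.mem_univ _⟩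
  have hxj : 0 < |x j| := by
    rcases (abs_nonneg (x j)).lt_or_eq with h | h
    · exact h
    · exfalso; apply hx; funext i
      have h1 := hj i (Finset.mem_univ i)
      have h2 : |x i| = 0 := le_antisymm (h1.trans h.symm.le) (abs_nonneg _)
      exact abs_eq_zero.mp h2
  set c : ℂ := Complex.exp ((Real.pi : ℂ) * Complex.I * ((ε * x j : ℝ) : ℂ)) with hc
  set v : Fin n → ℝ := Pi.single j ε with hv
  have hvnorm : ‖v‖ = ε := by
    rw [hv, Pi.norm_single, Real.norm_eq_abs, abs_of_pos hε]
  have hvb : ∀ i, |v i| ≤ ε := by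
    intro i
    by_cases h : i = j
    · subst h; rw [hv, Pi.single_eq_same]; exact le_of_eq (abs_of_pos hε)
    · rw [hv, Pi.single_eq_of_ne h]; simpa using hε.le
  have hiter : ∀ y, ‖iterDiff v (2*k) χ y‖ ≤ M * ε^(2*k) := by
    intro y
    have h := iterDiff_norm_le v (2*k) χ hχ M hM y
    rwa [hvnorm] at h
  set ρ2 : ℝ := R + ((2*k : ℕ) : ℝ) * ε with hρ2
  have hρ2nn : 0 ≤ ρ2 := by positivity
  have hvan : ∀ y : Fin n → ℝ, (∃ i, ρ2 < |y i|) → iterDiff v (2*k) χ y = 0 :=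
    iterDiff_eq_zero v ε hvb (2*k) χ R hχ0
  set P := Fintype.piFinset fun _ : Fin n => Finset.Icc (-⌈ρ2/ε⌉) ⌈ρ2/ε⌉ with hP
  have hTbound : ‖TFun n ε x (iterDiff v (2*k) χ)‖ ≤ (P.card : ℝ) * (M * ε ^ (2*k)) := by
    rw [TFun, tsum_eq_sum (s := P) (fun m hm => TFun_term_eq_zero hε x ρ2 _ hvan hm)]
    refine le_trans (norm_sum_le _ _) ?_
    have hterm : ∀ m ∈ P,
        ‖eFun n ε x m * ((((iterDiff v (2*k) χ) fun i => ε * (m i : ℝ)) : ℝ) : ℂ)‖ ≤ M * ε^(2*k) := by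
      intro m _
      rw [norm_mul, norm_eFun, one_mul, Complex.norm_real]
      exact hiter _
    calc ∑ m ∈ P, ‖eFun n ε x m * ((((iterDiff v (2*k) χ) fun i => ε * (m i : ℝ)) : ℝ) : ℂ)‖
        ≤ P.card • (M * ε^(2*k)) := Finset.sum_le_card_nsmul P _ _ hterm
      _ = (P.card : ℝ) * (M * ε^(2*k)) := by rw [nsmul_eq_mul]
  have hkey := TFun_key hε hε1 x j R χ hχ0 (2*k)
  -- card bound
  have hceil : (0:ℤ) ≤ ⌈ρ2/ε⌉ := Int.ceil_nonneg (by positivity)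
  have hcard : ε^n * (P.card : ℝ) ≤ A^n := by
    have h1 : P.card = ((⌈ρ2/ε⌉ + 1 - -⌈ρ2/ε⌉).toNat)^n := by
      rw [hP, Fintype.card_piFinset]
      simp [Int.card_Icc]
    have h2 : ε * (((⌈ρ2/ε⌉ + 1 - -⌈ρ2/ε⌉).toNat : ℕ) : ℝ) ≤ A := by
      have h3 : (((⌈ρ2/ε⌉ + 1 - -⌈ρ2/ε⌉).toNat : ℕ) : ℝ) = 2*(⌈ρ2/ε⌉ : ℝ) + 1 := by
        have h0 : ((⌈ρ2/ε⌉ + 1 - -⌈ρ2/ε⌉).toNat : ℤ) = 2*⌈ρ2/ε⌉ + 1 := by omega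
        have h0' := congrArg (fun z : ℤ => (z : ℝ)) h0
        push_cast at h0'
        exact h0'
      rw [h3]
      have h4 : (⌈ρ2/ε⌉ : ℝ) < ρ2/ε + 1 := Int.ceil_lt_add_one _
      have h5 : ε * (ρ2/ε) = ρ2 := by field_simp
      have h6 : ((2*k : ℕ) : ℝ) = 2*(k:ℝ) := by push_cast; ring
      have hk1 : (1:ℝ) ≤ (k:ℝ) := by exact_mod_cast hk
      rw [hAdef]
      rw [hρ2] at h5
      nlinarith
    calc ε^n * (P.card : ℝ) = (ε * (((⌈ρ2/ε⌉ + 1 - -⌈ρ2/ε⌉).toNat : ℕ) : ℝ))^n := by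
          rw [h1]; push_cast; rw [mul_pow]
      _ ≤ A^n := pow_le_pow_left₀ (by positivity) h2 n
  -- lower bound on ‖c - 1‖
  have ht1 : |ε * x j| ≤ 1 := by
    rw [abs_mul, abs_of_pos hε]
    have := hxb j
    calc ε * |x j| ≤ ε * (1/ε) := by nlinarith
      _ = 1 := by field_simp
  have hlow : 2 * (ε * |x j|) ≤ ‖c - 1‖ := by
    have h := norm_exp_pi_I_sub_one ht1
    rw [abs_mul, abs_of_pos hε] at h
    exact h
  have hL : 0 < ‖c - 1‖ := lt_of_lt_of_le (by positivity) hlow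
  -- Euclidean norm comparison
  have hs2 : 0 < ∑ i, x i ^ 2 := by
    obtain ⟨i, hi⟩ := Function.ne_iff.mp hx
    have h1 : 0 < x i ^ 2 := lt_of_le_of_ne (sq_nonneg _) (Ne.symm (pow_ne_zero 2 hi))
    exact lt_of_lt_of_le h1 (Finset.single_le_sum (f := fun i => x i ^ 2)
      (fun i _ => sq_nonneg _) (Finset.mem_univ i))
  set s : ℝ := Real.sqrt (∑ i, x i ^ 2) with hsdef
  have hs : 0 < s := Real.sqrt_pos.mpr hs2
  have hs_le : s ≤ Real.sqrt n * |x j| := by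
    have hsum : ∑ i, x i ^ 2 ≤ (n:ℝ) * x j ^ 2 := by
      calc ∑ i, x i ^ 2 ≤ ∑ _i : Fin n, x j ^ 2 := by
            refine Finset.sum_le_sum fun i _ => ?_
            have h1 := hj i (Finset.mem_univ i)
            nlinarith [abs_nonneg (x i), sq_abs (x i), sq_abs (x j)]
        _ = (n:ℝ) * x j ^ 2 := by simp [Finset.sum_const, Finset.card_univ, nsmul_eq_mul]
    calc s ≤ Real.sqrt ((n:ℝ) * x j ^ 2) := Real.sqrt_le_sqrt hsum
      _ = Real.sqrt n * |x j| := by rw [Real.sqrt_mul (Nat.cast_nonneg n), Real.sqrt_sq_eq_abs]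
  -- assemble
  have hch : ‖chkEps n χ ε x‖ = ε^n * ‖TFun n ε x χ‖ := by
    have hrfl : chkEps n χ ε x = ((ε^n : ℝ) : ℂ) * TFun n ε x χ := rfl
    rw [hrfl, norm_mul, Complex.norm_real, Real.norm_eq_abs, abs_of_pos (pow_pos hε n)]
  have e1 : ‖c - 1‖^(2*k) * ‖TFun n ε x χ‖ ≤ (P.card : ℝ) * (M * ε^(2*k)) := by
    rw [← norm_pow, ← norm_mul, hkey]
    exact hTbound
  have e2 : (ε*s)^(2*k) ≤ (n:ℝ)^k * (2*(ε*|x j|))^(2*k) := by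
    calc (ε*s)^(2*k) ≤ (ε*(Real.sqrt n * |x j|))^(2*k) :=
          pow_le_pow_left₀ (by positivity) (mul_le_mul_of_nonneg_left hs_le hε.le) _
      _ = (Real.sqrt n)^(2*k) * (ε*|x j|)^(2*k) := by
          rw [show ε*(Real.sqrt n * |x j|) = Real.sqrt n * (ε*|x j|) by ring, mul_pow]
      _ = (n:ℝ)^k * (ε*|x j|)^(2*k) := by
          rw [pow_mul, Real.sq_sqrt (Nat.cast_nonneg n)]
      _ ≤ (n:ℝ)^k * (2*(ε*|x j|))^(2*k) := by
          refine mul_le_mul_of_nonneg_left (pow_le_pow_left₀ (by positivity) (by linarith [mul_nonneg hε.le (abs_nonneg (x j))]) _)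
            (by positivity)
  have e3 : C * (2*(ε*|x j|))^(2*k) ≤ C * ‖c - 1‖^(2*k) := by
    refine mul_le_mul_of_nonneg_left (pow_le_pow_left₀ (by positivity) hlow _) ?_
    rw [hCdef]; positivity
  rw [hch, le_div_iff₀ (pow_pos hs (2*k))]
  refine le_of_mul_le_mul_right ?_ (pow_pos hL (2*k))
  calc ε^n * ‖TFun n ε x χ‖ * s^(2*k) * ‖c - 1‖^(2*k)
      = (ε^n * s^(2*k)) * (‖c - 1‖^(2*k) * ‖TFun n ε x χ‖) := by ring
    _ ≤ (ε^n * s^(2*k)) * ((P.card : ℝ) * (M * ε^(2*k))) :=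
        mul_le_mul_of_nonneg_left e1 (by positivity)
    _ = (ε^n * (P.card : ℝ)) * M * (ε^(2*k) * s^(2*k)) := by ring
    _ ≤ A^n * M * (ε^(2*k) * s^(2*k)) := by
        refine mul_le_mul_of_nonneg_right (mul_le_mul_of_nonneg_right hcard hMnn) (by positivity)
    _ = A^n * M * (ε*s)^(2*k) := by rw [mul_pow]
    _ ≤ A^n * M * ((n:ℝ)^k * (2*(ε*|x j|))^(2*k)) :=
        mul_le_mul_of_nonneg_left e2 (by positivity)
    _ = C * (2*(ε*|x j|))^(2*k) := by rw [hCdef]; ring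
    _ ≤ C * ‖c - 1‖^(2*k) := e3
end
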